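/- arXiv:2511.16724 — 2 statements merged into one kernel-verified Lean document; each statement's English description precedes it below -/
import Mathlib

section
/- Let V be a 5-element set and let E be the collection of all subsets of V of cardinality 3 or 4 (so |E| = 15), and let T be the collection of all subsets of V of cardinality 1 or 2 (so |T| = 15). The linear map Φ from (E → ℝ) to (T → ℝ) defined by Φ(w)(I) = Σ_{e ∈ E, e ∩ I ≠ ∅} w(e) is a linear bijection. In particular, for every assignment S : T → ℝ of prescribed cut values (the 15 independent entanglement entropies of a 5-qubit pure state) there exist unique real hyperedge weights w : E → ℝ such that for every I ∈ T the total weight of hyperedges meeting I equals S(I). -/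
/-- The 15 hyperedges: subsets of the 5-element vertex set of cardinality 3 or 4. -/
abbrev HyperEdge5 : Type := {e : Finset (Fin 5) // e.card = 3 ∨ e.card = 4}

/-- The 15 cut regions: subsets of the 5-element vertex set of cardinality 1 or 2. -/
abbrev CutRegion5 : Type := {I : Finset (Fin 5) // I.card = 1 ∨ I.card = 2}

/-- The cut-weight map: given hyperedge weights `w`, assigns to each region `I`
the total weight of hyperedges meeting `I`. -/
noncomputable def cutMap (w : HyperEdge5 → ℝ) : CutRegion5 → ℝ :=
  fun I => ∑ e : HyperEdge5, if (e.1 ∩ I.1).Nonempty then w e else 0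

/-!
A hyperedge misses `I` exactly when it lies in `J = Iᶜ`, so `Φ(w)(I) = W - ∑_{e ⊆ J} w e`,
where `W` is the total weight. If `Φ(w) = 0`, every such down-sum equals `W`. A 3-set contains
no other hyperedge and a 4-set contains exactly four 3-sets, so `w = W` on 3-sets and `w = -3W`
on 4-sets; then `W = 10W - 15W` forces `W = 0`. Complementation matches hyperedges with cut
regions, so the injective linear map `Φ` is between spaces of equal dimension, hence bijective.
Nothing changes for `k + 2` vertices and hyperedges of sizes `k` and `k + 1`, as long as `k ≥ 1`.
-/

open Finset

theorem Finset.sum_ite_inter_nonempty {V M : Type*} [Fintype V] [DecidableEq V] [AddCommGroup M]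
    (s : Finset (Finset V)) (f : Finset V → M) (I : Finset V) :
    ∑ e ∈ s, (if (e ∩ I).Nonempty then f e else 0) =
      ∑ e ∈ s, f e - ∑ e ∈ s with e ⊆ Iᶜ, f e := by
  have h_compl : ∀ e ∈ s, e ⊆ Iᶜ ↔ ¬(e ∩ I).Nonempty := fun e _ => by
    rw [subset_compl_iff_disjoint_right, disjoint_iff_inter_eq_empty, not_nonempty_iff_eq_empty]
  rw [← sum_filter, eq_sub_iff_add_eq, filter_congr h_compl, sum_filter_add_sum_filter_not]

theorem Nat.choose_add_two_self_lt {k : ℕ} (hk : 1 ≤ k) :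
    (k + 2).choose k < 1 + (k + 2) * k := by
  rw [Nat.choose_symm_add, Nat.choose_two_right, Nat.div_lt_iff_lt_mul two_pos]
  change (k + 2) * (k + 1) < _
  nlinarith

variable (R V : Type*) [Field R] [Fintype V] [DecidableEq V] (k : ℕ)

abbrev Hyperedge : Type _ := {e : Finset V // e.card = k ∨ e.card = k + 1}

abbrev CutRegion : Type _ := {I : Finset V // I.card = 1 ∨ I.card = 2}

def hyperedges : Finset (Finset V) := powersetCard k univ ∪ powersetCard (k + 1) univ

def cutWeight : (Hyperedge V k → R) →ₗ[R] (CutRegion V → R) where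
  toFun w I := ∑ e : Hyperedge V k, if (e.1 ∩ I.1).Nonempty then w e else 0
  map_add' w v := by
    ext I
    simp only [Pi.add_apply, ← sum_add_distrib, ite_add_zero]
  map_smul' a w := by
    ext I
    simp only [Pi.smul_apply, smul_eq_mul, RingHom.id_apply, mul_sum, mul_ite, mul_zero]

variable {R V k}

theorem mem_hyperedges {e : Finset V} : e ∈ hyperedges V k ↔ e.card = k ∨ e.card = k + 1 := by
  simp [hyperedges]

theorem cutWeight_apply (w : Hyperedge V k → R) (I : CutRegion V) :
    cutWeight R V k w I = ∑ e : Hyperedge V k, if (e.1 ∩ I.1).Nonempty then w e else 0 := rfl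

theorem sum_hyperedge_eq_sum_hyperedges {M : Type*} [AddCommMonoid M] (f : Finset V → M) :
    ∑ e : Hyperedge V k, f e.1 = ∑ e ∈ hyperedges V k, f e :=
  (sum_subtype _ (fun _ => mem_hyperedges) f).symm

theorem sum_hyperedges_eq_add {M : Type*} [AddCommMonoid M] (f : Finset V → M) :
    ∑ e ∈ hyperedges V k, f e =
      ∑ e ∈ powersetCard k univ, f e + ∑ e ∈ powersetCard (k + 1) univ, f e := by
  refine sum_union (disjoint_left.2 fun e he he' => ?_)
  rw [mem_powersetCard_univ] at he he'
  omega

theorem sum_hyperedges_subset_of_card_eq {M : Type*} [AddCommMonoid M] {J : Finset V}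
    (hJ : J.card = k) (f : Finset V → M) :
    ∑ e ∈ hyperedges V k with e ⊆ J, f e = f J := by
  rw [sum_filter]
  refine (sum_eq_single_of_mem J (mem_hyperedges.2 (.inl hJ)) fun e he hne => ?_).trans
    (if_pos subset_rfl)
  refine if_neg fun hsub => hne (eq_of_subset_of_card_le hsub ?_)
  rw [mem_hyperedges] at he
  omega

theorem filter_hyperedges_subset_of_card_eq_succ {J : Finset V} (hJ : J.card = k + 1) :
    {e ∈ hyperedges V k | e ⊆ J} = insert J (J.powersetCard k) := by
  ext e
  simp only [mem_filter, mem_hyperedges, mem_insert, mem_powersetCard]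
  constructor
  · rintro ⟨he | he, hsub⟩
    · exact .inr ⟨hsub, he⟩
    · exact .inl (eq_of_subset_of_card_le hsub (by omega))
  · rintro (rfl | ⟨hsub, he⟩)
    · exact ⟨.inr hJ, subset_rfl⟩
    · exact ⟨.inl he, hsub⟩

theorem sum_hyperedges_subset_of_card_eq_succ {M : Type*} [AddCommMonoid M] {J : Finset V}
    (hJ : J.card = k + 1) (f : Finset V → M) :
    ∑ e ∈ hyperedges V k with e ⊆ J, f e = f J + ∑ e ∈ J.powersetCard k, f e := by
  rw [filter_hyperedges_subset_of_card_eq_succ hJ, sum_insert]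
  rw [mem_powersetCard, hJ]
  omega

theorem eq_zero_of_forall_sum_subset_eq_sum [CharZero R] (hV : Fintype.card V = k + 2)
    (hk : 1 ≤ k) {f : Finset V → R}
    (h : ∀ J ∈ hyperedges V k,
      ∑ e ∈ hyperedges V k with e ⊆ J, f e = ∑ e ∈ hyperedges V k, f e) :
    ∀ e ∈ hyperedges V k, f e = 0 := by
  set W := ∑ e ∈ hyperedges V k, f e with hW
  have h_small : ∀ J : Finset V, J.card = k → f J = W := fun J hJ =>
    (sum_hyperedges_subset_of_card_eq hJ f).symm.trans (h J (mem_hyperedges.2 (.inl hJ)))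
  have h_large : ∀ J : Finset V, J.card = k + 1 → f J = -(k * W) := fun J hJ => by
    have hJW := h J (mem_hyperedges.2 (.inr hJ))
    rw [sum_hyperedges_subset_of_card_eq_succ hJ,
      sum_congr rfl fun e he => h_small e (mem_powersetCard.1 he).2, sum_const, card_powersetCard,
      hJ, Nat.choose_succ_self_right, nsmul_eq_mul] at hJW
    push_cast at hJW
    linear_combination hJW
  have h_count : (((1 + (k + 2) * k : ℕ) : R) - ((k + 2).choose k : ℕ)) * W = 0 := by
    rw [sum_hyperedges_eq_add, sum_congr rfl fun e he => h_small e (mem_powersetCard_univ.1 he),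
      sum_congr rfl fun e he => h_large e (mem_powersetCard_univ.1 he), sum_const, sum_const,
      card_powersetCard, card_powersetCard, card_univ, hV, Nat.choose_succ_self_right,
      nsmul_eq_mul, nsmul_eq_mul] at hW
    push_cast at hW ⊢
    linear_combination hW
  have hW0 : W = 0 := (mul_eq_zero.1 h_count).resolve_left <| sub_ne_zero.2 <| by
    exact_mod_cast (Nat.choose_add_two_self_lt hk).ne'
  intro e he
  rcases mem_hyperedges.1 he with he | he
  · rw [h_small e he, hW0]
  · rw [h_large e he, hW0, mul_zero, neg_zero]

theorem cutWeight_injective [CharZero R] (hV : Fintype.card V = k + 2) (hk : 1 ≤ k) :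
    Function.Injective (cutWeight R V k) := by
  rw [← LinearMap.ker_eq_bot, LinearMap.ker_eq_bot']
  intro w hw
  set f : Finset V → R := Function.extend Subtype.val w 0
  have hf : ∀ e : Hyperedge V k, f e.1 = w e := Subtype.val_injective.extend_apply w 0
  have h_down : ∀ J ∈ hyperedges V k,
      ∑ e ∈ hyperedges V k with e ⊆ J, f e = ∑ e ∈ hyperedges V k, f e := by
    intro J hJ
    have hJc : Jᶜ.card = 1 ∨ Jᶜ.card = 2 := by
      rw [card_compl, hV]
      rcases mem_hyperedges.1 hJ with hJ | hJ <;> omega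
    have hcut : ∑ e ∈ hyperedges V k, (if (e ∩ Jᶜ).Nonempty then f e else 0) = 0 := by
      rw [← sum_hyperedge_eq_sum_hyperedges]
      simpa only [hf, cutWeight_apply, Pi.zero_apply] using congr_fun hw ⟨Jᶜ, hJc⟩
    rw [sum_ite_inter_nonempty, compl_compl, sub_eq_zero] at hcut
    exact hcut.symm
  funext e
  rw [← hf]
  exact eq_zero_of_forall_sum_subset_eq_sum hV hk h_down e.1 (mem_hyperedges.2 e.2)

variable (V k) in
def hyperedgeEquivCutRegion (hV : Fintype.card V = k + 2) : Hyperedge V k ≃ CutRegion V :=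
  Equiv.subtypeEquiv (compl_involutive.toPerm _) fun e => by
    have := card_le_univ e
    simp only [Function.Involutive.coe_toPerm, card_compl]
    omega

theorem cutWeight_bijective [CharZero R] (hV : Fintype.card V = k + 2) (hk : 1 ≤ k) :
    Function.Bijective (cutWeight R V k) := by
  have h_dim : Module.finrank R (Hyperedge V k → R) = Module.finrank R (CutRegion V → R) := by
    simp only [Module.finrank_fintype_fun_eq_card,
      Fintype.card_congr (hyperedgeEquivCutRegion V k hV)]
  have h_inj := cutWeight_injective (R := R) hV hk
  exact ⟨h_inj, (LinearMap.injective_iff_surjective_of_finrank_eq_finrank h_dim).1 h_inj⟩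

theorem cutMap_eq_cutWeight : cutMap = cutWeight ℝ (Fin 5) 3 := rfl

theorem cutMap_linear_bijective :
    Function.Bijective cutMap ∧
    (∀ (a b : ℝ) (w v : HyperEdge5 → ℝ),
      cutMap (a • w + b • v) = a • cutMap w + b • cutMap v) ∧
    ∀ S : CutRegion5 → ℝ, ∃! w : HyperEdge5 → ℝ,
      ∀ I : CutRegion5,
        (∑ e : HyperEdge5, if (e.1 ∩ I.1).Nonempty then w e else 0) = S I := by
  have h_bij : Function.Bijective cutMap :=
    cutMap_eq_cutWeight ▸ cutWeight_bijective (by simp) (by norm_num)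
  refine ⟨h_bij, fun a b w v => ?_, fun S => ?_⟩
  · simp only [cutMap_eq_cutWeight, map_add, map_smul]
  · simpa only [funext_iff, cutMap] using h_bij.existsUnique S
end

section
/- Let V be a 5-element set, let E be the collection of all 15 subsets of V of cardinality 3 or 4, and let T be the collection of all 15 subsets of V of cardinality 1 or 2. The 15 × 15 matrix M over ℝ, with rows indexed by T and columns indexed by E, whose (I, e) entry is 1 if e ∩ I ≠ ∅ and 0 otherwise, is invertible (equivalently, det M ≠ 0). -/
/-- The 15 × 15 incidence matrix, rows indexed by the regions `T` and columns by the
hyperedges `E`, whose (I, e) entry is 1 if the hyperedge e meets the region I and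
0 otherwise. -/
def incidenceM : Matrix CutRegion5 HyperEdge5 ℝ :=
  Matrix.of fun I e => if (e.1 ∩ I.1).Nonempty then (1 : ℝ) else 0

/-!
Since `e ∩ I = ∅` iff `I ⊆ eᶜ`, and `e ↦ eᶜ` maps `E` bijectively onto `T`, the matrix is
`M = J - N` with `J` the all-ones matrix and `N` the zeta matrix of inclusion on `T`, which is
unitriangular. Its Möbius inverse `μ = N⁻¹` has total sum `𝟙ᵀμ𝟙 = 15 - 20 = -5`, so by
Sherman–Morrison `M` is invertible with `M⁻¹ = -μ - (μ𝟙)(𝟙ᵀμ) / 6`. The entries of `6 M⁻¹` are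
integers, and the identity `M · (6 M⁻¹) = 6` is checked by evaluation over `ℤ`.
-/

namespace Matrix

variable {m n : Type*} [Fintype n] [DecidableEq m]

theorem map_mul_smul_eq_one_of_mul_eq_smul_one {R K : Type*} [CommRing R] [Field K]
    (f : R →+* K) {A : Matrix m n R} {B : Matrix n m R} {c : R} (hc : f c ≠ 0)
    (h : A * B = c • (1 : Matrix m m R)) :
    A.map f * ((f c)⁻¹ • B.map f) = 1 := by
  have hmap : A.map f * B.map f = f c • (1 : Matrix m m K) := by
    rw [← Matrix.map_mul, h]
    ext i j
    simp [Matrix.one_apply, apply_ite f]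
  rw [Matrix.mul_smul, hmap, smul_smul, inv_mul_cancel₀ hc, one_smul]

theorem mulVecLin_bijective_of_mul_eq_one [Fintype m] [DecidableEq n] {R : Type*}
    [CommSemiring R] {A : Matrix m n R} {B : Matrix n m R} (hAB : A * B = 1) (hBA : B * A = 1) :
    Function.Bijective A.mulVecLin :=
  Function.bijective_iff_has_inverse.mpr
    ⟨B.mulVecLin,
      fun v => by simp [Matrix.mulVec_mulVec, hBA],
      fun v => by simp [Matrix.mulVec_mulVec, hAB]⟩

end Matrix

def incidenceMInt : Matrix CutRegion5 HyperEdge5 ℤ :=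
  Matrix.of fun I e => if (e.1 ∩ I.1).Nonempty then 1 else 0

/-- The Sherman–Morrison formula `6 M⁻¹ = -6μ - (μ𝟙)(𝟙ᵀμ)`, written out case by case. -/
def sixInvIncidenceM : Matrix HyperEdge5 CutRegion5 ℤ :=
  Matrix.of fun e I =>
    if e.1.card = 3 then
      if I.1.card = 1 then -1
      else if (e.1 ∩ I.1).card = 0 then -5 else 1
    else
      if I.1.card = 1 then (if (e.1 ∩ I.1).card = 1 then 3 else -3)
      else (if (e.1 ∩ I.1).card = 2 then -3 else 3)

set_option maxRecDepth 100000 in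
theorem incidenceMInt_mul_sixInvIncidenceM : incidenceMInt * sixInvIncidenceM = (6 : ℤ) • 1 := by
  decide

theorem incidenceM_eq_map_intCast : incidenceM = incidenceMInt.map (Int.castRingHom ℝ) := by
  ext I e
  simp only [incidenceM, incidenceMInt, Matrix.map_apply, Matrix.of_apply]
  split <;> simp

theorem card_cutRegion5_eq_card_hyperEdge5 :
    Fintype.card CutRegion5 = Fintype.card HyperEdge5 := by
  decide

/-- The incidence matrix is invertible: as a linear map it is a bijection, and
(equivalently) identifying the row and column index sets by any bijection, its
determinant is nonzero. -/
theorem incidenceM_invertible :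
    Function.Bijective incidenceM.mulVecLin ∧
    ∀ σ : CutRegion5 ≃ HyperEdge5, (incidenceM.submatrix id σ).det ≠ 0 := by
  set B := ((Int.castRingHom ℝ) 6)⁻¹ • sixInvIncidenceM.map (Int.castRingHom ℝ)
  have hMB : incidenceM * B = 1 := by
    rw [incidenceM_eq_map_intCast]
    exact Matrix.map_mul_smul_eq_one_of_mul_eq_smul_one _ (by norm_num)
      incidenceMInt_mul_sixInvIncidenceM
  have hBM : B * incidenceM = 1 :=
    (Matrix.mul_eq_one_comm_of_card_eq _ _ _ card_cutRegion5_eq_card_hyperEdge5).mp hMB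
  refine ⟨Matrix.mulVecLin_bijective_of_mul_eq_one hMB hBM, fun σ => ?_⟩
  apply Matrix.det_ne_zero_of_right_inverse (B := B.submatrix σ id)
  rw [Matrix.submatrix_mul_equiv, hMB, Matrix.submatrix_id_id]
end
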